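/- arXiv:2104.03457 — 4 statements merged into one kernel-verified Lean document; each statement's English description precedes it below -/
import Mathlib

section
/- Let e = 2m with m ≥ 1 and let α ∈ F_q with α ≠ 0. The equation α^{p^l} X^{p^{2l}} + α X = 0 has a solution X ∈ F_q^* if and only if e/s is even and α^{(q-1)/(p^s+1)} = (-1)^{m/s} (equality in F_q); and in that case the equation has exactly p^{2s} - 1 nonzero solutions in F_q. -/
open scoped BigOperators

noncomputable section

/-- The primitive `p`-th root of unity `ζ_p = exp(2πi/p)`. -/
def zetaP (p : ℕ) : ℂ := Complex.exp (2 * Real.pi * Complex.I / p)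

/-- The absolute trace map from `F_q = GF(p^e)` onto `F_p`. -/
def tr (p e : ℕ) [Fact p.Prime] (x : GaloisField p e) : ZMod p :=
  Algebra.trace (ZMod p) (GaloisField p e) x

/-- The Weil sum `S(α, β) = Σ_{x ∈ F_q} ζ_p^{Tr(α x^{p^l+1} + β x)}`. -/
def weilSum (p e l : ℕ) [Fact p.Prime] (α β : GaloisField p e) : ℂ :=
  letI : Fintype (GaloisField p e) := Fintype.ofFinite _
  ∑ x : GaloisField p e, zetaP p ^ (tr p e (α * x ^ (p ^ l + 1) + β * x)).val

/- The quadratic character `η` of `F_p`, integer-valued: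
`η(0) = 0`, `η(x) = 1` for nonzero squares, `η(x) = -1` for nonsquares. -/
open Classical in
def eta (p : ℕ) (x : ZMod p) : ℤ :=
  if x = 0 then 0 else if IsSquare x then 1 else -1

/- The cyclotomic classes of order 2 in `F_p^*`: `cyc p 0` is the set of nonzero
squares `C_0^{(2,p)}`, and `cyc p 1` is the set of nonsquares `C_1^{(2,p)}`. -/
open Classical in
def cyc (p : ℕ) [Fact p.Prime] (i : ℕ) : Finset (ZMod p) :=
  Finset.univ.filter (fun x => x ≠ 0 ∧ (if i = 0 then IsSquare x else ¬ IsSquare x))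

/-- `ψ_3(a) = ((p-1)/2) p^{e-3} Σ_{z1 ∈ F_p^*} ζ_p^{-z1} Σ_{z3 ∈ F_p^*} S(z1, a z3)`. -/
def psi3 (p e l : ℕ) [Fact p.Prime] (a : GaloisField p e) : ℂ :=
  ((p : ℂ) - 1) / 2 * (p : ℂ) ^ ((e : ℤ) - 3) *
    ∑ z1 ∈ ({0}ᶜ : Finset (ZMod p)), zetaP p ^ (-z1).val *
      ∑ z3 ∈ ({0}ᶜ : Finset (ZMod p)),
        weilSum p e l (algebraMap (ZMod p) (GaloisField p e) z1)
          (a * algebraMap (ZMod p) (GaloisField p e) z3)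

/-- `ψ_4^{(i)}(a, b) = p^{e-3} Σ_{c ∈ C_i} Σ_{z1 ∈ F_p^*} ζ_p^{-z1}
      Σ_{z2 ∈ F_p^*} ζ_p^{-c z2} S(z1, -a b⁻¹ z2)`, for `b ∈ F_p^*`. -/
def psi4 (p e l : ℕ) [Fact p.Prime] (i : ℕ) (a : GaloisField p e) (b : ZMod p) : ℂ :=
  (p : ℂ) ^ ((e : ℤ) - 3) *
    ∑ c ∈ cyc p i, ∑ z1 ∈ ({0}ᶜ : Finset (ZMod p)), zetaP p ^ (-z1).val *
      ∑ z2 ∈ ({0}ᶜ : Finset (ZMod p)), zetaP p ^ (-(c * z2)).val *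
        weilSum p e l (algebraMap (ZMod p) (GaloisField p e) z1)
          (-a * algebraMap (ZMod p) (GaloisField p e) (b⁻¹ * z2))

/-- `T_i(a,b) = |{(x1,x2) ∈ F_q² : Tr(x1^{p^l+1}) = 1, Tr(x2) ∈ C_i, Tr(a x1 + b x2) = 0}|`. -/
def Tcount (p e l : ℕ) [Fact p.Prime] (i : ℕ) (a b : GaloisField p e) : ℕ :=
  Nat.card {x : GaloisField p e × GaloisField p e //
    tr p e (x.1 ^ (p ^ l + 1)) = 1 ∧ tr p e x.2 ∈ cyc p i ∧ tr p e (a * x.1 + b * x.2) = 0}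

/-- The defining set `D_i = {(x1,x2) ∈ F_q² : Tr(x1^{p^l+1}) = 1, Tr(x2) ∈ C_i^{(2,p)}}`. -/
def Dset (p e l : ℕ) [Fact p.Prime] (i : ℕ) : Set (GaloisField p e × GaloisField p e) :=
  {x | tr p e (x.1 ^ (p ^ l + 1)) = 1 ∧ tr p e x.2 ∈ cyc p i}

/-- The codeword of `C_{D_i}` indexed by `(a, b) ∈ F_q²`:
the vector `(Tr(a x1 + b x2))_{(x1,x2) ∈ D_i}`. -/
def codeword (p e l : ℕ) [Fact p.Prime] (i : ℕ) (a b : GaloisField p e) :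
    Dset p e l i → ZMod p :=
  fun x => tr p e (a * x.1.1 + b * x.1.2)

/-- The linear code `C_{D_i} = {(Tr(a x1 + b x2))_{(x1,x2) ∈ D_i} : a, b ∈ F_q}`. -/
def code (p e l : ℕ) [Fact p.Prime] (i : ℕ) : Set (Dset p e l i → ZMod p) :=
  Set.range (fun ab : GaloisField p e × GaloisField p e => codeword p e l i ab.1 ab.2)

/-- The Hamming weight of a vector: the number of nonzero coordinates. -/
def wt {ι : Type*} {p : ℕ} (c : ι → ZMod p) : ℕ := Nat.card {x : ι // c x ≠ 0}

section Arith

lemma aux_mul (a : ℕ) (ha : 1 ≤ a) : (a+1)*(a-1) = a*a - 1 := by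
  rcases a with _|b
  · omega
  · simp only [Nat.succ_sub_one]
    ring_nf
    omega

lemma geom_nat (x k : ℕ) (hx : 1 ≤ x) :
    (x - 1) * (∑ i ∈ Finset.range k, x ^ i) = x ^ k - 1 := by
  induction k with
  | zero => simp
  | succ k ih =>
    rw [Finset.sum_range_succ, Nat.mul_add, ih, Nat.sub_mul, one_mul, pow_succ]
    have h1 : 1 ≤ x ^ k := Nat.one_le_pow _ _ hx
    have h4 : x ^ k ≤ x ^ k * x := Nat.le_mul_of_pos_right _ (by omega)
    have h5 : x * x ^ k = x ^ k * x := Nat.mul_comm _ _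
    omega

lemma sum_pow_parity (p c k : ℕ) (hp : Odd p) :
    (∑ i ∈ Finset.range k, (p^c) ^ i) ≡ k [MOD 2] := by
  induction k with
  | zero => rfl
  | succ k ih =>
    rw [Finset.sum_range_succ]
    have h1 : (p^c)^k % 2 = 1 := Nat.odd_iff.mp ((hp.pow).pow)
    have h2 := ih
    unfold Nat.ModEq at *
    omega

lemma gcd_pow_sub_one (p : ℕ) (hp : 2 ≤ p) : ∀ a b : ℕ,
    Nat.gcd (p^a - 1) (p^b - 1) = p ^ (Nat.gcd a b) - 1 := by
  intro a
  induction a using Nat.strong_induction_on with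
  | _ a ih =>
    intro b
    rcases Nat.eq_zero_or_pos a with rfl | ha
    · simp
    · obtain ⟨C, hC⟩ : p^a - 1 ∣ (p^a)^(b/a) - 1 := by
        simpa using Nat.sub_dvd_pow_sub_pow (p^a) 1 (b/a)
      have hb : p ^ b = p^(b % a) * (p^a)^(b/a) := by
        rw [← pow_mul, ← pow_add]
        rw [Nat.add_comm, Nat.div_add_mod]
      have h1 : 1 ≤ p^(b%a) := Nat.one_le_pow _ _ (by omega)
      have h2 : 1 ≤ (p^a)^(b/a) := Nat.one_le_pow _ _ (Nat.one_le_pow _ _ (by omega))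
      have key : p ^ b - 1 = (p^(b%a) - 1) + (p^(b%a) * C) * (p^a - 1) := by
        have h6 : p^(b%a) * ((p^a-1) * C) = p^(b%a) * ((p^a)^(b/a) - 1) := by rw [← hC]
        rw [Nat.mul_sub, mul_one] at h6
        have h3 : p^(b%a) * (p^a)^(b/a) = p ^ b := hb.symm
        rw [h3] at h6
        have h4 : p^(b%a) ≤ p^b := by
          calc p^(b%a) = p^(b%a) * 1 := by ring
          _ ≤ p^(b%a) * (p^a)^(b/a) := Nat.mul_le_mul_left _ h2
          _ = p ^ b := h3
        have h5 : p^(b%a) * C * (p^a - 1) = p^b - p^(b%a) := by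
          rw [← h6]; ring
        omega
      rw [key, Nat.gcd_add_mul_right_right, Nat.gcd_comm,
        ih (b % a) (Nat.mod_lt b ha) a, Nat.gcd_rec a b]

end Arith

section Cyclic
variable {G : Type*} [CommGroup G] [Fintype G] [IsCyclic G]

omit [Fintype G] [IsCyclic G] in
private lemma pow_key (g : G) (d : ℕ) (t : ℤ) : (g ^ t) ^ d = (g ^ d) ^ t := by
  rw [← zpow_natCast (g ^ t) d, ← zpow_mul, mul_comm, zpow_mul, zpow_natCast]

lemma cyclic_solvable (d : ℕ) (hd : 0 < d) (c : G) :
    (∃ u : G, u ^ d = c) ↔ c ^ (Fintype.card G / Nat.gcd d (Fintype.card G)) = 1 := by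
  obtain ⟨g, hg⟩ := IsCyclic.exists_generator (α := G)
  have horder : orderOf g = Fintype.card G := by
    rw [orderOf_eq_card_of_forall_mem_zpowers hg, Nat.card_eq_fintype_card]
  set n := Fintype.card G with hn
  set k := Nat.gcd d n with hk
  have hn0 : 0 < n := Fintype.card_pos
  have hk0 : 0 < k := Nat.gcd_pos_of_pos_left _ hd
  have hkd : k ∣ d := Nat.gcd_dvd_left _ _
  have hkn : k ∣ n := Nat.gcd_dvd_right _ _
  constructor
  · rintro ⟨u, rfl⟩
    rw [← pow_mul]
    obtain ⟨d', hd'⟩ := hkd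
    obtain ⟨n', hn'⟩ := hkn
    have hnq : n / k = n' := by rw [hn', Nat.mul_div_cancel_left _ hk0]
    have h1 : d * (n / k) = d' * n := by rw [hnq, hd', hn']; ring
    rw [h1, pow_mul, pow_card_eq_one]
  · intro hc
    obtain ⟨t, rfl⟩ := hg c
    have h2 : (g ^ t) ^ ((n / k : ℕ) : ℤ) = 1 := by rw [zpow_natCast]; exact hc
    rw [← zpow_mul] at h2
    have h3 : (orderOf g : ℤ) ∣ t * ((n / k : ℕ) : ℤ) := orderOf_dvd_iff_zpow_eq_one.mpr h2
    rw [horder] at h3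
    have h4 : (k : ℤ) ∣ t := by
      have hkn' : (n : ℤ) = (k : ℤ) * ((n / k : ℕ) : ℤ) := by
        exact_mod_cast (Nat.mul_div_cancel' hkn).symm
      have hnk0 : ((n / k : ℕ) : ℤ) ≠ 0 := by
        have : 0 < n / k := Nat.div_pos (Nat.le_of_dvd hn0 hkn) hk0
        exact_mod_cast this.ne'
      rw [hkn', mul_comm (k : ℤ), mul_comm t] at h3
      exact (mul_dvd_mul_iff_left hnk0).mp h3
    obtain ⟨w, hw⟩ := h4
    refine ⟨g ^ (Nat.gcdA d n * w), ?_⟩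
    show (g ^ (Nat.gcdA d n * w)) ^ d = g ^ t
    rw [pow_key, ← zpow_natCast g d, ← zpow_mul]
    rw [← orderOf_dvd_sub_iff_zpow_eq_zpow, horder]
    have hbez : (k : ℤ) = d * Nat.gcdA d n + n * Nat.gcdB d n := Nat.gcd_eq_gcd_ab d n
    have h5 : (d : ℤ) * (Nat.gcdA d n * w) - t = -(Nat.gcdB d n) * w * n := by
      rw [hw, hbez]; ring
    rw [h5]
    exact ⟨-(Nat.gcdB d n) * w, by ring⟩

lemma cyclic_count (d : ℕ) (hd : 0 < d) (c : G) (h : ∃ u : G, u ^ d = c) :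
    Nat.card {u : G // u ^ d = c} = Nat.gcd d (Fintype.card G) := by
  obtain ⟨g, hg⟩ := IsCyclic.exists_generator (α := G)
  have horder : orderOf g = Fintype.card G := by
    rw [orderOf_eq_card_of_forall_mem_zpowers hg, Nat.card_eq_fintype_card]
  set n := Fintype.card G with hn
  set k := Nat.gcd d n with hk
  have hn0 : 0 < n := Fintype.card_pos
  have hk0 : 0 < k := Nat.gcd_pos_of_pos_left _ hd
  have hkn : k ∣ n := Nat.gcd_dvd_right _ _
  obtain ⟨u0, hu0⟩ := h
  have e1 : {u : G // u ^ d = c} ≃ {v : G // v ^ d = 1} := by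
    refine ⟨fun u => ⟨u.1 * u0⁻¹, by rw [mul_pow, inv_pow, u.2, hu0, mul_inv_cancel]⟩,
      fun v => ⟨v.1 * u0, by rw [mul_pow, v.2, hu0, one_mul]⟩, fun u => ?_, fun v => ?_⟩
    · ext; simp
    · ext; simp
  rw [Nat.card_congr e1]
  let φ : G →* G := powMonoidHom d
  have e2 : {v : G // v ^ d = 1} ≃ φ.ker := Equiv.subtypeEquivRight (by
    intro v; simp [φ, MonoidHom.mem_ker, powMonoidHom])
  rw [Nat.card_congr e2]
  have hrange : φ.range = Subgroup.zpowers (g ^ d) := by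
    apply le_antisymm
    · rintro x ⟨u, rfl⟩
      obtain ⟨t, rfl⟩ := hg u
      refine Subgroup.mem_zpowers_iff.mpr ⟨t, ?_⟩
      rw [← pow_key]
      simp [φ, powMonoidHom_apply]
    · rintro x hx
      obtain ⟨t, ht⟩ := Subgroup.mem_zpowers_iff.mp hx
      refine ⟨g ^ t, ?_⟩
      rw [← ht, ← pow_key]
      simp [φ, powMonoidHom_apply]
  have hcr : Nat.card φ.range = n / k := by
    rw [hrange, Nat.card_zpowers, orderOf_pow, horder, Nat.gcd_comm]
  have hker : Nat.card φ.ker * Nat.card φ.range = n := by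
    calc Nat.card φ.ker * Nat.card φ.range
        = Nat.card φ.ker * Nat.card (G ⧸ φ.ker) := by
          rw [Nat.card_congr (QuotientGroup.quotientKerEquivRange φ).toEquiv]
      _ = Nat.card φ.ker * φ.ker.index := by rw [Subgroup.index_eq_card]
      _ = Nat.card G := Subgroup.card_mul_index _
      _ = n := Nat.card_eq_fintype_card
  rw [hcr] at hker
  have hnk : n / k > 0 := Nat.div_pos (Nat.le_of_dvd hn0 hkn) hk0
  have hmul : k * (n / k) = n := Nat.mul_div_cancel' hkn
  exact Nat.eq_of_mul_eq_mul_right hnk (by omega)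

end Cyclic


/-- solvability of `α^{p^l} X^{p^{2l}} + α X = 0` in `F_q^*`
and the number of nonzero solutions (paper Lemma 5). -/
theorem solvable_zero_eq (p e l m s : ℕ) [Fact p.Prime] (hp : Odd p)
    (hl : 0 < l) (hm : 1 ≤ m) (he : e = 2 * m) (hs : s = Nat.gcd l e)
    (α : GaloisField p e) (hα : α ≠ 0) :
    ((∃ x : GaloisField p e, x ≠ 0 ∧ α ^ p ^ l * x ^ p ^ (2 * l) + α * x = 0) ↔
      (Even (e / s) ∧
        α ^ ((p ^ e - 1) / (p ^ s + 1)) = (-1 : GaloisField p e) ^ (m / s))) ∧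
    ((Even (e / s) ∧
        α ^ ((p ^ e - 1) / (p ^ s + 1)) = (-1 : GaloisField p e) ^ (m / s)) →
      Nat.card {x : GaloisField p e //
        x ≠ 0 ∧ α ^ p ^ l * x ^ p ^ (2 * l) + α * x = 0} = p ^ (2 * s) - 1) := by
  have hpp : p.Prime := Fact.out
  have hp2 : 2 ≤ p := hpp.two_le
  have hpodd : p % 2 = 1 := Nat.odd_iff.mp hp
  have hp3 : 2 < p := by omega
  haveI : Fact (2 < p) := ⟨hp3⟩
  have he0 : e ≠ 0 := by omega
  letI : Fintype (GaloisField p e) := Fintype.ofFinite _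
  letI : DecidableEq (GaloisField p e) := Classical.decEq _
  have hcardF : Fintype.card (GaloisField p e) = p ^ e := by
    rw [← Nat.card_eq_fintype_card, GaloisField.card p e he0]
  set n := p ^ e - 1 with hn
  have hcardU : Fintype.card (GaloisField p e)ˣ = n := by
    rw [Fintype.card_units, hcardF]
  -- basic positivity
  have hpe1 : 1 < p ^ e := Nat.one_lt_pow he0 hp2
  have hn0 : 0 < n := by omega
  set d := p ^ (2 * l) - 1 with hd
  have hp2l1 : 1 < p ^ (2 * l) := Nat.one_lt_pow (by omega) hp2
  have hd0 : 0 < d := by omega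
  have hs0 : 0 < s := by rw [hs]; exact Nat.gcd_pos_of_pos_left _ hl
  have hsl : s ∣ l := hs ▸ Nat.gcd_dvd_left _ _
  have hse : s ∣ e := hs ▸ Nat.gcd_dvd_right _ _
  have hsle : s ≤ l := Nat.le_of_dvd hl hsl
  have hps1 : 1 ≤ p ^ s := Nat.one_le_pow _ _ (by omega)
  have hpl1 : 1 ≤ p ^ l := Nat.one_le_pow _ _ (by omega)
  -- the element c₀
  set c₀ : GaloisField p e := -(α ^ (p ^ l - 1))⁻¹ with hc₀
  have hαpow : α ^ (p ^ l - 1) ≠ 0 := pow_ne_zero _ hα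
  have hc0 : c₀ ≠ 0 := neg_ne_zero.mpr (inv_ne_zero hαpow)
  set c : (GaloisField p e)ˣ := Units.mk0 c₀ hc0 with hcdef
  -- the equation is equivalent to a power equation
  have heq : ∀ x : GaloisField p e, x ≠ 0 →
      ((α ^ p ^ l * x ^ p ^ (2 * l) + α * x = 0) ↔ x ^ d = c₀) := by
    intro x hx
    have hplE : p ^ l = (p ^ l - 1) + 1 := by omega
    have hp2lE : p ^ (2 * l) = d + 1 := by omega
    have hid : α ^ p ^ l * x ^ p ^ (2 * l) + α * x
        = (α ^ (p ^ l - 1) * x ^ d + 1) * (α * x) := by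
      have e1 : α ^ p ^ l = α ^ (p ^ l - 1) * α := by
        rw [← pow_succ, Nat.sub_add_cancel hpl1]
      have e2 : x ^ p ^ (2 * l) = x ^ d * x := by
        rw [← pow_succ, hd, Nat.sub_add_cancel (by omega : 1 ≤ p ^ (2 * l))]
      rw [e1, e2]; ring
    have hax : α * x ≠ 0 := mul_ne_zero hα hx
    rw [hid, mul_eq_zero]
    simp only [hax, or_false]
    rw [add_eq_zero_iff_eq_neg, mul_comm, ← eq_div_iff hαpow, hc₀]
    rw [neg_div, one_div]
  -- bijection with units
  have hbij : {x : GaloisField p e // x ≠ 0 ∧ α ^ p ^ l * x ^ p ^ (2 * l) + α * x = 0}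
      ≃ {u : (GaloisField p e)ˣ // u ^ d = c} := by
    refine ⟨fun x => ⟨Units.mk0 x.1 x.2.1, Units.ext ?_⟩,
      fun u => ⟨(u.1 : GaloisField p e), u.1.ne_zero, (heq _ u.1.ne_zero).mpr ?_⟩,
      fun x => ?_, fun u => ?_⟩
    · rw [Units.val_pow_eq_pow_val, Units.val_mk0, hcdef, Units.val_mk0]
      exact (heq x.1 x.2.1).mp x.2.2
    · rw [← Units.val_pow_eq_pow_val, u.2, hcdef, Units.val_mk0]
    · apply Subtype.ext; simp
    · apply Subtype.ext; apply Units.ext; simp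
  have hexists : (∃ x : GaloisField p e, x ≠ 0 ∧ α ^ p ^ l * x ^ p ^ (2 * l) + α * x = 0)
      ↔ (∃ u : (GaloisField p e)ˣ, u ^ d = c) := by
    constructor
    · rintro ⟨x, hx⟩
      exact ⟨(hbij ⟨x, hx⟩).1, (hbij ⟨x, hx⟩).2⟩
    · rintro ⟨u, hu⟩
      exact ⟨(hbij.symm ⟨u, hu⟩).1, (hbij.symm ⟨u, hu⟩).2⟩
  have hcpow : ∀ M : ℕ, (c ^ M = 1) ↔ c₀ ^ M = 1 := by
    intro M
    rw [← Units.val_eq_one, Units.val_pow_eq_pow_val, hcdef, Units.val_mk0]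
  have hsolv : (∃ x : GaloisField p e, x ≠ 0 ∧ α ^ p ^ l * x ^ p ^ (2 * l) + α * x = 0)
      ↔ c₀ ^ (n / Nat.gcd d n) = 1 := by
    rw [hexists, cyclic_solvable d hd0 c, hcardU, hcpow]
  have hgcdval : Nat.gcd d n = p ^ (Nat.gcd (2 * l) e) - 1 := by
    rw [hd, hn]; exact gcd_pow_sub_one p hp2 (2 * l) e
  have hA1 : α ^ n = 1 := by
    have := FiniteField.pow_card_sub_one_eq_one α hα
    rwa [hcardF] at this
  by_cases h2se : 2 * s ∣ e
  · -- even case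
    have hg2 : Nat.gcd (2 * l) e = 2 * s := by
      refine Nat.dvd_antisymm ?_ (Nat.dvd_gcd (mul_dvd_mul_left 2 hsl) h2se)
      have h2e : Nat.gcd (2 * l) e ∣ Nat.gcd (2 * l) (2 * e) :=
        Nat.dvd_gcd (Nat.gcd_dvd_left _ _) ((Nat.gcd_dvd_right _ _).trans (dvd_mul_left e 2))
      rwa [Nat.gcd_mul_left, ← hs] at h2e
    have hD : Nat.gcd d n = p ^ (2 * s) - 1 := by rw [hgcdval, hg2]
    have hp2s1 : 1 < p ^ (2 * s) := Nat.one_lt_pow (by omega) hp2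
    have hDn : (p ^ (2 * s) - 1) ∣ n := hD ▸ Nat.gcd_dvd_right d n
    set K := n / (p ^ (2 * s) - 1) with hKdef
    have hK : (p ^ (2 * s) - 1) * K = n := Nat.mul_div_cancel' hDn
    have hngcd : n / Nat.gcd d n = K := by rw [hD]
    have hKsum : K = ∑ i ∈ Finset.range (e / (2 * s)), (p ^ (2 * s)) ^ i := by
      have hg := geom_nat (p ^ (2 * s)) (e / (2 * s)) (by omega)
      have hpow : (p ^ (2 * s)) ^ (e / (2 * s)) = p ^ e := by
        rw [← pow_mul, Nat.mul_div_cancel' h2se]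
      rw [hpow, ← hn] at hg
      exact Nat.eq_of_mul_eq_mul_left (by omega) (hK.trans hg.symm)
    have hms : s ∣ m := by
      have h := h2se; rw [he] at h
      exact (mul_dvd_mul_iff_left (two_ne_zero)).mp h
    have hmse : e / (2 * s) = m / s := by
      rw [he]; exact Nat.mul_div_mul_left m s (by omega)
    have hKpar : K % 2 = (m / s) % 2 := by
      have h := sum_pow_parity p (2 * s) (e / (2 * s)) hp
      unfold Nat.ModEq at h
      rw [← hKsum, hmse] at h
      exact h
    have hevens : Even (e / s) := by
      rw [he, Nat.mul_div_assoc 2 hms]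
      exact even_two_mul _
    have hfac : (p ^ s + 1) * (p ^ s - 1) = p ^ (2 * s) - 1 := by
      rw [aux_mul (p ^ s) hps1, two_mul, pow_add]
    have hexp : (p ^ e - 1) / (p ^ s + 1) = (p ^ s - 1) * K := by
      apply Nat.div_eq_of_eq_mul_right (by omega)
      rw [← mul_assoc, hfac, hK]
    -- exponent congruence
    have hmod : ((p ^ l - 1) * K) % n = ((p ^ s - 1) * K) % n := by
      obtain ⟨t, ht⟩ := hsl
      have htodd : t % 2 = 1 := by
        rcases Nat.even_or_odd t with ht2 | ht2
        · exfalso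
          obtain ⟨t', ht'⟩ := ht2
          have h2sl : 2 * s ∣ l := ⟨t', by rw [ht, ht']; ring⟩
          have h7 : 2 * s ∣ Nat.gcd l e := Nat.dvd_gcd h2sl h2se
          rw [← hs] at h7
          have := Nat.le_of_dvd hs0 h7
          omega
        · exact Nat.odd_iff.mp ht2
      obtain ⟨t', ht'⟩ : ∃ t', t - 1 = 2 * t' := ⟨(t - 1) / 2, by omega⟩
      have hls : l - s = 2 * s * t' := by
        have h1 : l - s = s * (t - 1) := by rw [ht, Nat.mul_sub, mul_one]
        rw [h1, ht']; ring
      obtain ⟨C, hC⟩ : (p ^ (2 * s) - 1) ∣ p ^ (l - s) - 1 := by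
        have h := Nat.sub_dvd_pow_sub_pow (p ^ (2 * s)) 1 t'
        rwa [← pow_mul, one_pow, ← hls] at h
      have hpls : p ^ l - p ^ s = p ^ s * (p ^ (l - s) - 1) := by
        rw [Nat.mul_sub, mul_one, ← pow_add, Nat.add_sub_cancel' hsle]
      have hdvd : n ∣ (p ^ l - 1) * K - (p ^ s - 1) * K := by
        have hsub : (p ^ l - 1) * K - (p ^ s - 1) * K = (p ^ l - p ^ s) * K := by
          rw [← Nat.sub_mul]
          congr 1
          omega
        rw [hsub, hpls, hC, ← hK]
        exact ⟨p ^ s * C, by ring⟩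
      have hle : (p ^ s - 1) * K ≤ (p ^ l - 1) * K := by
        apply Nat.mul_le_mul_right
        have : p ^ s ≤ p ^ l := Nat.pow_le_pow_right (by omega) hsle
        omega
      exact ((Nat.modEq_iff_dvd' hle).mpr hdvd).symm
    have hcond : (c₀ ^ K = 1) ↔
        (α ^ ((p ^ e - 1) / (p ^ s + 1)) = (-1 : GaloisField p e) ^ (m / s)) := by
      rw [hexp]
      have h1 : c₀ ^ K = (-1 : GaloisField p e) ^ K * (α ^ ((p ^ l - 1) * K))⁻¹ := by
        rw [hc₀, neg_pow, inv_pow, ← pow_mul]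
      have h2 : α ^ ((p ^ l - 1) * K) = α ^ ((p ^ s - 1) * K) := by
        rw [pow_eq_pow_mod ((p ^ l - 1) * K) hA1, pow_eq_pow_mod ((p ^ s - 1) * K) hA1, hmod]
      have h3 : (-1 : GaloisField p e) ^ K = (-1 : GaloisField p e) ^ (m / s) := by
        have hm1 : (-1 : GaloisField p e) ^ 2 = 1 := by ring
        rw [pow_eq_pow_mod K hm1, pow_eq_pow_mod (m / s) hm1, hKpar]
      rw [h1, h2, h3, mul_comm]
      exact inv_mul_eq_one₀ (pow_ne_zero _ hα)
    have hmain : (∃ x : GaloisField p e, x ≠ 0 ∧ α ^ p ^ l * x ^ p ^ (2 * l) + α * x = 0)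
        ↔ (α ^ ((p ^ e - 1) / (p ^ s + 1)) = (-1 : GaloisField p e) ^ (m / s)) := by
      rw [hsolv, hngcd, hcond]
    constructor
    · exact ⟨fun h => ⟨hevens, hmain.mp h⟩, fun h => hmain.mpr h.2⟩
    · intro hyp
      have hex := hexists.mp (hmain.mpr hyp.2)
      rw [Nat.card_congr hbij, cyclic_count d hd0 c hex, hcardU, hD]
  · -- odd case
    have hg1 : Nat.gcd (2 * l) e = s := by
      have h1 : s ∣ Nat.gcd (2 * l) e :=
        Nat.dvd_gcd (hsl.trans (dvd_mul_left l 2)) hse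
      have h2 : Nat.gcd (2 * l) e ∣ 2 * s := by
        have h2e : Nat.gcd (2 * l) e ∣ Nat.gcd (2 * l) (2 * e) :=
          Nat.dvd_gcd (Nat.gcd_dvd_left _ _) ((Nat.gcd_dvd_right _ _).trans (dvd_mul_left e 2))
        rwa [Nat.gcd_mul_left, ← hs] at h2e
      obtain ⟨u, hu⟩ := h1
      have hu2 : u ∣ 2 := by
        have := hu ▸ h2
        rw [mul_comm 2 s] at this
        exact (mul_dvd_mul_iff_left hs0.ne').mp this
      rcases (Nat.dvd_prime Nat.prime_two).mp hu2 with rfl | rfl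
      · omega
      · exfalso
        apply h2se
        have : s * 2 ∣ e := hu ▸ Nat.gcd_dvd_right (2 * l) e
        rwa [mul_comm] at this
    have hD : Nat.gcd d n = p ^ s - 1 := by rw [hgcdval, hg1]
    have hps1' : 1 < p ^ s := Nat.one_lt_pow (by omega) hp2
    have hDn : (p ^ s - 1) ∣ n := hD ▸ Nat.gcd_dvd_right d n
    set K := n / (p ^ s - 1) with hKdef
    have hK : (p ^ s - 1) * K = n := Nat.mul_div_cancel' hDn
    have hngcd : n / Nat.gcd d n = K := by rw [hD]
    have hKsum : K = ∑ i ∈ Finset.range (e / s), (p ^ s) ^ i := by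
      have hg := geom_nat (p ^ s) (e / s) (by omega)
      have hpow : (p ^ s) ^ (e / s) = p ^ e := by
        rw [← pow_mul, Nat.mul_div_cancel' hse]
      rw [hpow, ← hn] at hg
      exact Nat.eq_of_mul_eq_mul_left (by omega) (hK.trans hg.symm)
    have hesodd : ¬ Even (e / s) := by
      intro hev
      apply h2se
      obtain ⟨w, hw⟩ := hev
      have : e = s * (e / s) := (Nat.mul_div_cancel' hse).symm
      exact ⟨w, by rw [this, hw]; ring⟩
    have hKodd : K % 2 = 1 := by
      have h := sum_pow_parity p s (e / s) hp
      unfold Nat.ModEq at h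
      rw [← hKsum] at h
      have : (e / s) % 2 = 1 := Nat.odd_iff.mp (Nat.not_even_iff_odd.mp hesodd)
      omega
    have hplK : α ^ ((p ^ l - 1) * K) = 1 := by
      obtain ⟨C, hC⟩ : (p ^ s - 1) ∣ p ^ l - 1 := by
        have h := Nat.sub_dvd_pow_sub_pow (p ^ s) 1 (l / s)
        rwa [← pow_mul, one_pow, Nat.mul_div_cancel' hsl] at h
      have hrw : (p ^ l - 1) * K = n * C := by rw [hC, ← hK]; ring
      rw [hrw, pow_mul, hA1, one_pow]
    have hnotsolv : ¬ (∃ x : GaloisField p e,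
        x ≠ 0 ∧ α ^ p ^ l * x ^ p ^ (2 * l) + α * x = 0) := by
      rw [hsolv, hngcd]
      have h1 : c₀ ^ K = (-1 : GaloisField p e) ^ K * (α ^ ((p ^ l - 1) * K))⁻¹ := by
        rw [hc₀, neg_pow, inv_pow, ← pow_mul]
      rw [h1, hplK, inv_one, mul_one, Odd.neg_one_pow (Nat.odd_iff.mpr hKodd)]
      exact CharP.neg_one_ne_one (GaloisField p e) p
    exact ⟨iff_of_false hnotsolv (fun h => hesodd h.1), fun h => absurd h.1 hesodd⟩

end
end

section
/- Let e = 2m with m ≥ 1 and let α ∈ F_q with α ≠ 0. The map X ↦ α^{p^l} X^{p^{2l}} + α X is a permutation of F_q if and only if either e/s is odd, or e/s is even and α^{(q-1)/(p^s+1)} ≠ (-1)^{m/s} (equality in F_q). -/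
open scoped BigOperators

noncomputable section

/-! The map is additive, so it permutes `F_q` iff it has no nonzero root, i.e. iff
`c = -α / α ^ p ^ l` is not a `(p ^ (2l) - 1)`-th power in the cyclic group `F_qˣ`. That
happens iff `c ^ M ≠ 1`, where `M = (q - 1) / (p ^ d - 1)` and `d = gcd(2l, e)` is `s` or `2s`
according as `e / s` is odd or even. Since `p ^ l ≡ p ^ (l % d) [MOD p ^ d - 1]`, `c ^ M` is
`(-1) ^ M = -1` in the odd case and `(-1) ^ (m / s) / α ^ ((q - 1) / (p ^ s + 1))` in the even
case, the parity of `M` being that of `e / d`. -/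

open Function

namespace Nat

theorem pow_modEq_pow_mod {p : ℕ} (hp : p ≠ 0) (a d : ℕ) :
    p ^ a ≡ p ^ (a % d) [MOD p ^ d - 1] := by
  have hpd : p ^ d ≡ 1 [MOD p ^ d - 1] := modEq_sub (one_le_pow _ _ (pos_of_ne_zero hp))
  calc p ^ a = p ^ (a % d) * (p ^ d) ^ (a / d) := by
        rw [← pow_mul, ← pow_add, mod_add_div]
    _ ≡ p ^ (a % d) * 1 ^ (a / d) [MOD p ^ d - 1] := (hpd.pow _).mul_left _
    _ = p ^ (a % d) := by rw [one_pow, mul_one]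

theorem odd_pow_sub_one_div_iff {x : ℕ} (hx : Odd x) (hx1 : x ≠ 1) (t : ℕ) :
    Odd ((x ^ t - 1) / (x - 1)) ↔ Odd t := by
  have hx2 : 2 ≤ x := by obtain ⟨k, rfl⟩ := hx; omega
  rw [← Nat.geomSum_eq hx2, Finset.odd_sum_iff_odd_card_odd,
    Finset.filter_true_of_mem fun i _ => hx.pow, Finset.card_range]

theorem gcd_two_mul_left (l e : ℕ) : gcd (2 * l) e = gcd 2 (e / gcd l e) * gcd l e := by
  rcases Nat.eq_zero_or_pos (gcd l e) with h | h
  · simp [Nat.gcd_eq_zero_iff.mp h]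
  calc gcd (2 * l) e = gcd (gcd l e * (2 * (l / gcd l e))) (gcd l e * (e / gcd l e)) := by
        rw [mul_left_comm, Nat.mul_div_cancel' (Nat.gcd_dvd_left l e),
          Nat.mul_div_cancel' (Nat.gcd_dvd_right l e)]
    _ = gcd 2 (e / gcd l e) * gcd l e := by
        rw [Nat.gcd_mul_left, (Nat.coprime_div_gcd_div_gcd h).gcd_mul_right_cancel, mul_comm]

theorem mod_two_mul_gcd_of_even {l e : ℕ} (h : Even (e / gcd l e)) :
    l % (2 * gcd l e) = gcd l e := by
  rcases Nat.eq_zero_or_pos (gcd l e) with h0 | h0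
  · simp [Nat.gcd_eq_zero_iff.mp h0]
  have hodd : Odd (l / gcd l e) := by
    rw [← Nat.not_even_iff_odd]
    intro hl
    have := Nat.dvd_gcd hl.two_dvd h.two_dvd
    rw [Nat.coprime_div_gcd_div_gcd h0] at this
    omega
  calc l % (2 * gcd l e) = gcd l e * (l / gcd l e) % (gcd l e * 2) := by
        rw [mul_comm 2, Nat.mul_div_cancel' (Nat.gcd_dvd_left l e)]
    _ = gcd l e := by rw [Nat.mul_mod_mul_left, Nat.odd_iff.mp hodd, mul_one]

theorem sub_one_mul_div_sq_sub_one {x N : ℕ} (h : x ^ 2 - 1 ∣ N) :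
    (x - 1) * (N / (x ^ 2 - 1)) = N / (x + 1) := by
  have hsq : x ^ 2 - 1 = (x + 1) * (x - 1) := by rw [← Nat.sq_sub_sq, one_pow]
  rw [hsq] at h ⊢
  rw [← Nat.div_div_eq_div_mul, Nat.mul_div_cancel' (Nat.dvd_div_of_mul_dvd h)]

end Nat

theorem IsCyclic.exists_pow_eq_iff {G : Type*} [CommGroup G] [IsCyclic G] [Finite G] (n : ℕ)
    (c : G) : (∃ x, x ^ n = c) ↔ c ^ (Nat.card G / (Nat.card G).gcd n) = 1 := by
  set k := Nat.card G / (Nat.card G).gcd n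
  have hk : k ∣ Nat.card G := Nat.div_dvd_of_dvd (Nat.gcd_dvd_left _ _)
  have hnk : n * k = n / (Nat.card G).gcd n * Nat.card G := by
    rw [Nat.div_mul_right_comm (Nat.gcd_dvd_right _ _),
      Nat.mul_div_assoc _ (Nat.gcd_dvd_left _ _)]
  have hrange : (powMonoidHom n : G →* G).range = (powMonoidHom k).ker := by
    apply Subgroup.eq_of_le_of_card_ge
    · rintro _ ⟨x, rfl⟩
      rw [MonoidHom.mem_ker, powMonoidHom_apply, powMonoidHom_apply, ← pow_mul, hnk, pow_mul,
        pow_card_eq_one']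
    · rw [IsCyclic.card_powMonoidHom_ker, IsCyclic.card_powMonoidHom_range, Nat.gcd_eq_right hk]
  exact SetLike.ext_iff.mp hrange c

namespace FiniteField

variable {K : Type*} [Field K] [Finite K]

theorem exists_ne_zero_pow_eq_iff (n : ℕ) {c : K} (hc : c ≠ 0) :
    (∃ x ≠ 0, x ^ n = c) ↔ c ^ ((Nat.card K - 1) / (Nat.card K - 1).gcd n) = 1 := by
  rw [← Nat.card_units, ← Units.val_mk0 hc, ← Units.val_pow_eq_pow_val, Units.val_eq_one,
    ← IsCyclic.exists_pow_eq_iff]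
  constructor
  · rintro ⟨x, hx, hxc⟩
    exact ⟨Units.mk0 x hx, Units.ext (by simp [hxc])⟩
  · rintro ⟨x, hxc⟩
    exact ⟨x, x.ne_zero, by simpa using congrArg Units.val hxc⟩

theorem pow_eq_pow_of_modEq {α : K} (hα : α ≠ 0) {a b : ℕ}
    (h : a ≡ b [MOD Nat.card K - 1]) : α ^ a = α ^ b := by
  have := Fintype.ofFinite K
  rw [Nat.card_eq_fintype_card] at h
  have hord := orderOf_dvd_of_pow_eq_one (pow_card_sub_one_eq_one α hα)
  rw [← pow_mod_orderOf, show a % orderOf α = b % orderOf α from h.of_dvd hord, pow_mod_orderOf]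

theorem pow_pow_mul_eq_pow_pow_mod_mul {p e d : ℕ} (hp : p ≠ 0) (hK : Nat.card K = p ^ e)
    (hde : d ∣ e) {α : K} (hα : α ≠ 0) (l : ℕ) :
    α ^ (p ^ l * ((p ^ e - 1) / (p ^ d - 1))) =
      α ^ (p ^ (l % d) * ((p ^ e - 1) / (p ^ d - 1))) := by
  apply pow_eq_pow_of_modEq hα
  have h := (Nat.pow_modEq_pow_mod hp l d).mul_right' ((p ^ e - 1) / (p ^ d - 1))
  rw [hK]
  rwa [Nat.mul_div_cancel' (Nat.pow_sub_one_dvd_pow_sub_one p hde)] at h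

end FiniteField

theorem bijective_mul_pow_add_mul_iff {K : Type*} [Field K] [Finite K] (p : ℕ) [ExpChar K p]
    {a : K} (ha : a ≠ 0) (b : K) (k : ℕ) :
    Bijective (fun x : K => a * x ^ p ^ k + b * x) ↔
      ¬ ∃ x ≠ 0, x ^ (p ^ k - 1) = -b / a := by
  let φ : K →+ K := (AddMonoidHom.mulLeft a).comp (iterateFrobenius K p k).toAddMonoidHom +
    AddMonoidHom.mulLeft b
  have hφ : ⇑φ = fun x => a * x ^ p ^ k + b * x := by
    ext x; simp [φ, iterateFrobenius_def]
  have hroot (x : K) (hx : x ≠ 0) : φ x = 0 ↔ x ^ (p ^ k - 1) = -b / a := by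
    have hpk : x ^ p ^ k = x ^ (p ^ k - 1) * x := by
      rw [← pow_succ, Nat.sub_add_cancel (Nat.one_le_pow _ _ (expChar_pos K p))]
    rw [hφ]
    beta_reduce
    rw [hpk, ← mul_assoc, ← add_mul, mul_eq_zero, or_iff_left hx, eq_div_iff ha, mul_comm,
      add_eq_zero_iff_eq_neg]
  rw [← hφ, ← Finite.injective_iff_bijective, injective_iff_map_eq_zero]
  simp only [not_exists, not_and]
  refine forall_congr' fun x => ?_
  by_cases hx : x = 0
  · simp [hx]
  · simp [hx, hroot x hx]

section LinearizedBinomial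

variable {K : Type*} [Field K] [Finite K] {p e : ℕ} {α : K}

theorem bijective_linearizedBinomial_iff [ExpChar K p] (hK : Nat.card K = p ^ e) (hα : α ≠ 0)
    (l : ℕ) {d : ℕ} (hd : Nat.gcd (2 * l) e = d) :
    Bijective (fun x : K => α ^ p ^ l * x ^ p ^ (2 * l) + α * x) ↔
      (-1) ^ ((p ^ e - 1) / (p ^ d - 1)) * α ^ ((p ^ e - 1) / (p ^ d - 1)) /
        α ^ (p ^ (l % d) * ((p ^ e - 1) / (p ^ d - 1))) ≠ 1 := by
  have hc : -α / α ^ p ^ l ≠ 0 := div_ne_zero (neg_ne_zero.mpr hα) (pow_ne_zero _ hα)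
  rw [bijective_mul_pow_add_mul_iff p (pow_ne_zero _ hα),
    FiniteField.exists_ne_zero_pow_eq_iff _ hc, hK, Nat.pow_sub_one_gcd_pow_sub_one,
    Nat.gcd_comm, hd, div_pow, neg_pow, ← pow_mul,
    FiniteField.pow_pow_mul_eq_pow_pow_mod_mul (expChar_pos K p).ne' hK
      (hd ▸ Nat.gcd_dvd_right _ _) hα]

variable [Fact p.Prime] [CharP K p]

theorem bijective_linearizedBinomial_of_odd (hp : Odd p) (hK : Nat.card K = p ^ e) (hα : α ≠ 0)
    {l : ℕ} (h : Odd (e / Nat.gcd l e)) :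
    Bijective (fun x : K => α ^ p ^ l * x ^ p ^ (2 * l) + α * x) := by
  set s := Nat.gcd l e
  have hs : s ≠ 0 := by rintro h0; simp [h0] at h
  have hd : Nat.gcd (2 * l) e = s := by
    rw [Nat.gcd_two_mul_left, Nat.coprime_two_left.mpr h, one_mul]
  have hpe : p ^ e = (p ^ s) ^ (e / s) := by
    rw [← pow_mul, Nat.mul_div_cancel' (Nat.gcd_dvd_right l e)]
  have hM : Odd ((p ^ e - 1) / (p ^ s - 1)) := by
    rwa [hpe,
      Nat.odd_pow_sub_one_div_iff hp.pow (Nat.one_lt_pow hs (Fact.out : p.Prime).one_lt).ne']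
  have : Fact (2 < p) :=
    ⟨(Fact.out : p.Prime).two_le.lt_of_ne (by rintro rfl; exact absurd hp (by decide))⟩
  rw [bijective_linearizedBinomial_iff hK hα l hd,
    Nat.mod_eq_zero_of_dvd (Nat.gcd_dvd_left l e), pow_zero, one_mul,
    mul_div_cancel_right₀ _ (pow_ne_zero _ hα), hM.neg_one_pow]
  exact CharP.neg_one_ne_one K p

theorem bijective_linearizedBinomial_iff_of_even (hp : Odd p) (hK : Nat.card K = p ^ e)
    (hα : α ≠ 0) {l : ℕ} (h : Even (e / Nat.gcd l e)) :
    Bijective (fun x : K => α ^ p ^ l * x ^ p ^ (2 * l) + α * x) ↔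
      α ^ ((p ^ e - 1) / (p ^ Nat.gcd l e + 1)) ≠ (-1) ^ (e / (2 * Nat.gcd l e)) := by
  set s := Nat.gcd l e
  have he : e ≠ 0 := by rintro rfl; exact Finite.one_lt_card.ne' (hK.trans (pow_zero p))
  have hs : s ≠ 0 := Nat.gcd_ne_zero_right he
  have hd : Nat.gcd (2 * l) e = 2 * s := by
    rw [Nat.gcd_two_mul_left, Nat.gcd_eq_left h.two_dvd]
  have h2se : 2 * s ∣ e := hd ▸ Nat.gcd_dvd_right _ _
  have hpar : (-1 : K) ^ ((p ^ e - 1) / (p ^ (2 * s) - 1)) = (-1) ^ (e / (2 * s)) := by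
    have hpe : p ^ e = (p ^ (2 * s)) ^ (e / (2 * s)) := by
      rw [← pow_mul, Nat.mul_div_cancel' h2se]
    have hM := Nat.odd_pow_sub_one_div_iff (x := p ^ (2 * s)) hp.pow
      (Nat.one_lt_pow (by omega) (Fact.out : p.Prime).one_lt).ne' (e / (2 * s))
    rw [← hpe, Nat.odd_iff, Nat.odd_iff] at hM
    rw [neg_one_pow_eq_pow_mod_two, neg_one_pow_eq_pow_mod_two (n := e / (2 * s))]
    congr 1
    omega
  have hexp :
      (p ^ s - 1) * ((p ^ e - 1) / (p ^ (2 * s) - 1)) = (p ^ e - 1) / (p ^ s + 1) := by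
    have hdvd := Nat.pow_sub_one_dvd_pow_sub_one p h2se
    rw [pow_mul'] at hdvd ⊢
    exact Nat.sub_one_mul_div_sq_sub_one hdvd
  have hsplit (M : ℕ) : p ^ s * M = (p ^ s - 1) * M + M := by
    rw [Nat.sub_one_mul, Nat.sub_add_cancel (Nat.le_mul_of_pos_left _ (pow_pos hp.pos _))]
  rw [bijective_linearizedBinomial_iff hK hα l hd, Nat.mod_two_mul_gcd_of_even h, hsplit,
    pow_add, hexp, hpar, mul_div_mul_right _ _ (pow_ne_zero _ hα), Ne, Ne,
    div_eq_one_iff_eq (pow_ne_zero _ hα), eq_comm]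

end LinearizedBinomial

theorem perm_iff_general (p e l m s : ℕ) [Fact p.Prime] (hp : Odd p)
    (hm : 1 ≤ m) (he : e = 2 * m) (hs : s = Nat.gcd l e)
    (α : GaloisField p e) (hα : α ≠ 0) :
    Function.Bijective
        (fun x : GaloisField p e => α ^ p ^ l * x ^ p ^ (2 * l) + α * x) ↔
      (Odd (e / s) ∨
        (Even (e / s) ∧
          α ^ ((p ^ e - 1) / (p ^ s + 1)) ≠ (-1 : GaloisField p e) ^ (m / s))) := by
  have hK : Nat.card (GaloisField p e) = p ^ e := GaloisField.card p e (by omega)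
  subst hs
  rcases Nat.even_or_odd (e / Nat.gcd l e) with heven | hodd
  · have hms : e / (2 * Nat.gcd l e) = m / Nat.gcd l e := by
      rw [he, Nat.mul_div_mul_left _ _ two_pos]
    rw [bijective_linearizedBinomial_iff_of_even hp hK hα heven, hms]
    simp [heven, Nat.not_odd_iff_even.mpr heven]
  · exact iff_of_true (bijective_linearizedBinomial_of_odd hp hK hα hodd) (Or.inl hodd)

/-- `X ↦ α^{p^l} X^{p^{2l}} + α X` is a permutation polynomial of `F_q`
iff `e/s` is odd, or `e/s` is even and `α^{(q-1)/(p^s+1)} ≠ (-1)^{m/s}`. -/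
theorem perm_iff (p e l m s : ℕ) [Fact p.Prime] (hp : Odd p)
    (hl : 0 < l) (hm : 1 ≤ m) (he : e = 2 * m) (hs : s = Nat.gcd l e)
    (α : GaloisField p e) (hα : α ≠ 0) :
    Function.Bijective
        (fun x : GaloisField p e => α ^ p ^ l * x ^ p ^ (2 * l) + α * x) ↔
      (Odd (e / s) ∨
        (Even (e / s) ∧
          α ^ ((p ^ e - 1) / (p ^ s + 1)) ≠ (-1 : GaloisField p e) ^ (m / s))) :=
  perm_iff_general p e l m s hp hm he hs α hα

end
end

section
/- Let e = 2m with m ≥ 1, suppose s divides m and m/s ≡ 0 (mod 2), and let S = {β ∈ F_q : the equation X^{p^{2l}} + X = -β^{p^l} has a solution X in F_q}. Then |S| = p^{e-2s}. -/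
open scoped BigOperators

noncomputable section

/-!
The map `L x = x ^ p ^ (2 * l) + x` is additive and `β ↦ -β ^ p ^ l` is a bijection of `F_q`,
so the set counted is in bijection with the image of `L`, which has `q / |ker L|` elements.
Put `a = p ^ (2 * s)`, `r = l / s`, `t = m / s`, so that `q = a ^ t`, `p ^ (2 * l) = a ^ r` and
`gcd r t = 1`. Since `t` is even, `r` is odd and `2 (a - 1) ∣ q - 1`, so there is `ζ` with
`ζ ^ (a - 1) = -1`, hence `ζ ^ a ^ r = -ζ`. Multiplication by `ζ` then maps the fixed points of
`y ↦ y ^ a` onto `ker L`: `y ^ a ^ r = y` and `y ^ a ^ t = y` together force `y ^ a = y`.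
These fixed points are `0` and the `(a - 1)`-th roots of unity, `a` elements in all.
-/

theorem IsPrimitiveRoot.exists_of_dvd_card_sub_one {F : Type*} [Field F] [Fintype F] {n : ℕ}
    (hn : n ∣ Fintype.card F - 1) : ∃ ζ : F, IsPrimitiveRoot ζ n := by
  obtain ⟨g, hg⟩ := IsCyclic.exists_ofOrder_eq_natCard (α := Fˣ)
  have hcard : Nat.card Fˣ = Fintype.card F - 1 := by
    rw [Nat.card_units, Nat.card_eq_fintype_card]
  have hcard0 : Nat.card Fˣ ≠ 0 := Nat.card_pos.ne'
  rw [← hcard] at hn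
  have hg' : IsPrimitiveRoot g (Nat.card Fˣ) := hg ▸ IsPrimitiveRoot.orderOf g
  have hn0 : n ≠ 0 := by
    rintro rfl
    exact hcard0 (zero_dvd_iff.mp hn)
  have h := hg'.pow_of_dvd ((Nat.div_ne_zero_iff_of_dvd hn).mpr ⟨hcard0, hn0⟩)
    (Nat.div_dvd_of_dvd hn)
  rw [Nat.div_div_self hn hcard0] at h
  exact ⟨_, IsPrimitiveRoot.coe_units_iff.mpr h⟩

theorem FiniteField.card_pow_eq_self {F : Type*} [Field F] [Fintype F] {a : ℕ}
    (ha : a - 1 ∣ Fintype.card F - 1) : Nat.card {y : F // y ^ a = y} = a := by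
  classical
  have hn : 0 < a - 1 := Nat.pos_of_ne_zero fun h ↦ by
    rw [h, zero_dvd_iff] at ha
    have := Fintype.one_lt_card (α := F)
    omega
  obtain ⟨n, rfl⟩ : ∃ n, a = n + 1 := ⟨a - 1, by omega⟩
  rw [Nat.add_sub_cancel] at ha hn
  obtain ⟨ζ, hζ⟩ := IsPrimitiveRoot.exists_of_dvd_card_sub_one ha
  have hset : {y : F | y ^ (n + 1) = y} = insert 0 (Polynomial.nthRootsFinset n (1 : F)) := by
    ext y
    rcases eq_or_ne y 0 with rfl | hy
    · simp
    · simp [Polynomial.mem_nthRootsFinset hn, pow_succ, mul_eq_right₀ hy, hy]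
  rw [← Set.coe_ofPred, Nat.card_coe_set_eq, hset, Set.ncard_coe_finset,
    Finset.card_insert_of_notMem, hζ.card_nthRootsFinset]
  simp [Polynomial.mem_nthRootsFinset hn, hn.ne']

theorem FiniteField.pow_pow_eq_self_iff_of_coprime {K : Type*} [GroupWithZero K] [Fintype K]
    {a r t : ℕ} (hcard : Fintype.card K = a ^ t) (hrt : r.Coprime t) (y : K) :
    y ^ a ^ r = y ↔ y ^ a = y := by
  have iterate_eq (n : ℕ) : (· ^ a)^[n] y = y ^ a ^ n := congrFun (pow_iterate a n) y
  have periodic_iff (n : ℕ) : Function.IsPeriodicPt (· ^ a) n y ↔ y ^ a ^ n = y := by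
    rw [Function.IsPeriodicPt, Function.IsFixedPt, iterate_eq]
  refine ⟨fun hr ↦ ?_, fun h ↦ (periodic_iff r).mp (Function.IsFixedPt.isPeriodicPt h r)⟩
  have ht : Function.IsPeriodicPt (· ^ a) t y :=
    (periodic_iff t).mpr (hcard ▸ FiniteField.pow_card y)
  simpa [hrt.gcd_eq_one] using (((periodic_iff r).mpr hr).gcd ht).eq

theorem FiniteField.card_pow_pow_eq_neg {F : Type*} [Field F] [Fintype F] {a r t : ℕ}
    (ha : Odd a) (hcard : Fintype.card F = a ^ t) (ht : Even t) (hrt : r.Coprime t) :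
    Nat.card {x : F // x ^ a ^ r = -x} = a := by
  have hr : Odd r := (hrt.coprime_dvd_right ht.two_dvd).odd_of_right
  have ha1 : 1 < a := by
    refine lt_of_le_of_ne ha.pos fun h ↦ ?_
    have := Fintype.one_lt_card (α := F)
    rw [hcard, ← h, one_pow] at this
    exact lt_irrefl 1 this
  have hdvd : 2 * (a - 1) ∣ Fintype.card F - 1 := by
    obtain ⟨k, rfl⟩ := ht
    have h2 : 2 ∣ a + 1 := (ha.add_odd odd_one).two_dvd
    calc 2 * (a - 1) ∣ (a + 1) * (a - 1) := mul_dvd_mul_right h2 _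
      _ = a ^ 2 - 1 := by rw [← Nat.sq_sub_sq, one_pow]
      _ ∣ (a ^ 2) ^ k - 1 := Nat.sub_one_dvd_pow_sub_one _ _
      _ = Fintype.card F - 1 := by rw [hcard, ← pow_mul, two_mul]
  obtain ⟨ζ, hζ⟩ := IsPrimitiveRoot.exists_of_dvd_card_sub_one hdvd
  have hζ0 : ζ ≠ 0 := hζ.ne_zero (by omega)
  have hζa : ζ ^ a = -ζ := by
    have h := hζ.pow_of_dvd (by omega) (dvd_mul_left _ _)
    rw [Nat.mul_div_cancel _ (by omega)] at h
    rw [← Nat.sub_add_cancel ha1.le, pow_succ, h.eq_neg_one_of_two_right, neg_one_mul]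
  have hper : Function.IsPeriodicPt (· ^ a) 2 ζ := by
    simp [Function.IsPeriodicPt, Function.IsFixedPt, hζa, ha.neg_pow]
  have hζr : ζ ^ a ^ r = -ζ := by
    rw [← congrFun (pow_iterate a r) ζ, ← hper.iterate_mod_apply, Nat.odd_iff.mp hr]
    exact hζa
  calc Nat.card {x : F // x ^ a ^ r = -x} = Nat.card {y : F // y ^ a = y} :=
        (Nat.card_congr ((Equiv.mulLeft₀ ζ hζ0).subtypeEquiv fun y ↦ ?_)).symm
    _ = a := FiniteField.card_pow_eq_self ((dvd_mul_left _ _).trans hdvd)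
  rw [Equiv.mulLeft₀_apply, mul_pow, hζr, neg_mul, neg_inj, mul_right_inj' hζ0,
    FiniteField.pow_pow_eq_self_iff_of_coprime hcard hrt]

theorem FiniteField.card_exists_pow_add_eq_mul_card_pow_eq_neg {F : Type*} [Field F] [Finite F]
    (p : ℕ) [Fact p.Prime] [CharP F p] (j k : ℕ) :
    Nat.card {β : F // ∃ x : F, x ^ p ^ k + x = -β ^ p ^ j} *
      Nat.card {x : F // x ^ p ^ k = -x} = Nat.card F := by
  let L : F →+ F := (iterateFrobenius F p k).toAddMonoidHom + AddMonoidHom.id F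
  have hL (x : F) : L x = x ^ p ^ k + x := rfl
  have hrange : Nat.card {β : F // ∃ x : F, x ^ p ^ k + x = -β ^ p ^ j} = Nat.card L.range :=
    Nat.card_congr <| ((iterateFrobeniusEquiv F p j).toEquiv.trans (Equiv.neg F)).subtypeEquiv
      fun β ↦ by rw [AddMonoidHom.mem_range]; rfl
  have hker : Nat.card {x : F // x ^ p ^ k = -x} = Nat.card L.ker :=
    Nat.card_congr <| Equiv.subtypeEquivRight fun x ↦ by
      rw [AddMonoidHom.mem_ker, hL, add_eq_zero_iff_eq_neg]
  rw [hrange, hker, ← AddSubgroup.index_ker, mul_comm, AddSubgroup.card_mul_index]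

theorem card_solvable_set_general (p e l m s : ℕ) [Fact p.Prime] (hp : Odd p)
    (hm : 1 ≤ m) (he : e = 2 * m) (hs : s = Nat.gcd l e)
    (hsm : s ∣ m) (heven : Even (m / s)) :
    Nat.card {β : GaloisField p e //
      ∃ x : GaloisField p e, x ^ p ^ (2 * l) + x = -β ^ p ^ l} = p ^ (e - 2 * s) := by
  let _ : Fintype (GaloisField p e) := Fintype.ofFinite _
  have hsl : s ∣ l := hs ▸ Nat.gcd_dvd_left l e
  have hs0 : 0 < s := hs ▸ Nat.gcd_pos_of_pos_right l (by omega)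
  have hgcd : Nat.gcd l m = s :=
    Nat.dvd_antisymm (hs ▸ he ▸ Nat.gcd_dvd_gcd_mul_left_right l m 2) (Nat.dvd_gcd hsl hsm)
  have hcop : (l / s).Coprime (m / s) := hgcd ▸ Nat.coprime_div_gcd_div_gcd (hgcd ▸ hs0)
  have hpow {n : ℕ} (hn : s ∣ n) : p ^ (2 * n) = (p ^ (2 * s)) ^ (n / s) := by
    rw [← pow_mul, mul_assoc, Nat.mul_div_cancel' hn]
  have hker : Nat.card {x : GaloisField p e // x ^ p ^ (2 * l) = -x} = p ^ (2 * s) := by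
    rw [hpow hsl]
    refine FiniteField.card_pow_pow_eq_neg hp.pow ?_ heven hcop
    rw [← Nat.card_eq_fintype_card, GaloisField.card p e (by omega), he, hpow hsm]
  have hcard := FiniteField.card_exists_pow_add_eq_mul_card_pow_eq_neg (F := GaloisField p e)
    p l (2 * l)
  rw [hker, GaloisField.card p e (by omega)] at hcard
  have hsplit : p ^ e = p ^ (e - 2 * s) * p ^ (2 * s) := by
    rw [← pow_add, Nat.sub_add_cancel (by have := Nat.le_of_dvd hm hsm; omega)]
  exact Nat.eq_of_mul_eq_mul_right (pow_pos hp.pos _) (hcard.trans hsplit)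

/-- if `m/s` is even then the set of `β` for which
`X^{p^{2l}} + X = -β^{p^l}` is solvable has `p^{e-2s}` elements (paper Lemma 6). -/
theorem card_solvable_set (p e l m s : ℕ) [Fact p.Prime] (hp : Odd p)
    (hl : 0 < l) (hm : 1 ≤ m) (he : e = 2 * m) (hs : s = Nat.gcd l e)
    (hsm : s ∣ m) (heven : Even (m / s)) :
    Nat.card {β : GaloisField p e //
      ∃ x : GaloisField p e, x ^ p ^ (2 * l) + x = -β ^ p ^ l} = p ^ (e - 2 * s) :=
  card_solvable_set_general p e l m s hp hm he hs hsm heven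

end
end

section
/- Let p be an odd prime with p ≡ 3 (mod 4). Then for every y ∈ F_p^*: Σ_{x ∈ C_0^{(2,p)}} η(x^2 - y) = Σ_{x ∈ C_1^{(2,p)}} η(x^2 - y), and this common value equals 0 if y ∈ C_0^{(2,p)} and equals -1 if y ∈ C_1^{(2,p)}. -/
open scoped BigOperators

noncomputable section

/-! Since `p ≡ 3 (mod 4)`, `-1` is a nonsquare, so `x ↦ -x` swaps `C_0` and `C_1` while fixing
`x ^ 2`: the two sums agree. Together with the term `η(-y) = -η(y)` at `x = 0` they make up the
complete sum `∑ₓ η(x ^ 2 - y)`, which is `-1` because `x` contributes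
`#{z | x ^ 2 - z ^ 2 = y} - 1` and the conic `x ^ 2 - z ^ 2 = y`, i.e. `u v = y`, has `p - 1` points.
Hence `2 ∑_{C_0} η(x ^ 2 - y) = η(y) - 1`. -/

open Finset

namespace FiniteField

variable {F : Type*} [Field F] [Fintype F] [DecidableEq F]

theorem card_sq_sub_sq_eq_card_mul_eq (hF : ringChar F ≠ 2) (y : F) :
    #{q : F × F | q.1 ^ 2 - q.2 ^ 2 = y} = #{q : F × F | q.1 * q.2 = y} := by
  have h2 : (2 : F) ≠ 0 := Ring.two_ne_zero hF
  let e : F × F ≃ F × F :=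
    { toFun := fun q => (q.1 - q.2, q.1 + q.2)
      invFun := fun q => ((q.1 + q.2) / 2, (q.2 - q.1) / 2)
      left_inv := fun q => by ext <;> field_simp <;> ring
      right_inv := fun q => by ext <;> field_simp <;> ring }
  refine card_equiv e fun q => ?_
  simp only [mem_filter_univ, e, Equiv.coe_fn_mk]
  ring_nf

theorem card_mul_eq_of_ne_zero {y : F} (hy : y ≠ 0) :
    #{q : F × F | q.1 * q.2 = y} = Fintype.card F - 1 := by
  rw [← card_univ, ← card_erase_of_mem (mem_univ 0)]
  refine card_nbij' Prod.fst (fun u => (u, u⁻¹ * y)) ?_ ?_ ?_ fun _ _ => rfl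
  · rintro ⟨u, v⟩ h
    obtain rfl : u * v = y := by simpa using h
    simpa using left_ne_zero_of_mul hy
  · intro u hu
    simp_all
  · rintro ⟨u, v⟩ h
    obtain rfl : u * v = y := by simpa using h
    simp [left_ne_zero_of_mul hy]

theorem sum_quadraticChar_sq_sub (hF : ringChar F ≠ 2) {y : F} (hy : y ≠ 0) :
    ∑ x : F, quadraticChar F (x ^ 2 - y) = -1 := by
  have hsqrts (x : F) : quadraticChar F (x ^ 2 - y) = #{z : F | x ^ 2 - z ^ 2 = y} - 1 := by
    rw [eq_sub_iff_add_eq, ← quadraticChar_card_sqrts hF, Set.toFinset_ofPred]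
    congr 2
    exact filter_congr fun z _ => by rw [eq_sub_iff_add_eq, sub_eq_iff_eq_add', eq_comm]
  have hfibres :
      ∑ x : F, #{z : F | x ^ 2 - z ^ 2 = y} = #{q : F × F | q.1 ^ 2 - q.2 ^ 2 = y} := by
    simp only [card_filter, Fintype.sum_prod_type]
  calc ∑ x : F, quadraticChar F (x ^ 2 - y)
      = #{q : F × F | q.1 ^ 2 - q.2 ^ 2 = y} - (Fintype.card F : ℤ) := by
        simp [hsqrts, sum_sub_distrib, ← hfibres]
    _ = -1 := by
        rw [card_sq_sub_sq_eq_card_mul_eq hF, card_mul_eq_of_ne_zero hy,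
          Nat.cast_sub Fintype.card_pos]
        ring

theorem quadraticChar_neg (hF : Fintype.card F % 4 = 3) (x : F) :
    quadraticChar F (-x) = -quadraticChar F x := by
  have hneg_one : quadraticChar F (-1) = -1 := by
    rwa [quadraticChar_neg_one_iff_not_isSquare, isSquare_neg_one_iff, not_not]
  rw [neg_eq_neg_one_mul x, map_mul, hneg_one, neg_one_mul]

theorem isSquare_neg_iff (hF : Fintype.card F % 4 = 3) {x : F} (hx : x ≠ 0) :
    IsSquare (-x) ↔ ¬IsSquare x := by
  rw [← quadraticChar_one_iff_isSquare (neg_ne_zero.mpr hx), quadraticChar_neg hF,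
    ← quadraticChar_neg_one_iff_not_isSquare, neg_eq_iff_eq_neg]

end FiniteField

section Cyclotomic

variable {p : ℕ} [Fact p.Prime]

theorem eta_eq_quadraticChar (x : ZMod p) : eta p x = quadraticChar (ZMod p) x := by
  rw [eta, quadraticChar_apply, quadraticCharFun]
  split_ifs <;> rfl

theorem mem_cyc_zero {x : ZMod p} : x ∈ cyc p 0 ↔ x ≠ 0 ∧ IsSquare x := by
  simp [cyc]

theorem mem_cyc_one {x : ZMod p} : x ∈ cyc p 1 ↔ x ≠ 0 ∧ ¬IsSquare x := by
  simp [cyc]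

theorem sum_univ_eq_add_sum_cyc {M : Type*} [AddCommMonoid M] (f : ZMod p → M) :
    ∑ x, f x = f 0 + (∑ x ∈ cyc p 0, f x + ∑ x ∈ cyc p 1, f x) := by
  have hdisj : Disjoint (cyc p 0) (cyc p 1) :=
    disjoint_left.mpr fun x h0 h1 => (mem_cyc_one.mp h1).2 (mem_cyc_zero.mp h0).2
  have hunion : cyc p 0 ∪ cyc p 1 = univ.erase 0 := by
    ext x
    simp only [mem_union, mem_cyc_zero, mem_cyc_one, mem_erase, mem_univ, and_true]
    tauto
  rw [← sum_union hdisj, hunion, add_sum_erase _ _ (mem_univ 0)]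

theorem neg_mem_cyc_one_iff (hp : p % 4 = 3) {x : ZMod p} : -x ∈ cyc p 1 ↔ x ∈ cyc p 0 := by
  have hcard : Fintype.card (ZMod p) % 4 = 3 := by rwa [ZMod.card]
  rw [mem_cyc_one, mem_cyc_zero, neg_ne_zero]
  exact and_congr_right fun hx => by rw [FiniteField.isSquare_neg_iff hcard hx, not_not]

theorem sum_cyc_zero_eq_sum_cyc_one (hp : p % 4 = 3) {M : Type*} [AddCommMonoid M]
    {f : ZMod p → M} (hf : ∀ x, f (-x) = f x) :
    ∑ x ∈ cyc p 0, f x = ∑ x ∈ cyc p 1, f x :=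
  sum_equiv (Equiv.neg _) (fun _ => (neg_mem_cyc_one_iff hp).symm) fun x _ => (hf x).symm

end Cyclotomic

/-- for `p ≡ 3 (mod 4)` and `y ∈ F_p^*`,
`Σ_{x ∈ C_0} η(x² - y) = Σ_{x ∈ C_1} η(x² - y)`, with common value
`0` if `y ∈ C_0` and `-1` if `y ∈ C_1` (paper Lemma 7). -/
theorem eta_sum_eval (p : ℕ) [Fact p.Prime] (hp : p % 4 = 3)
    (y : ZMod p) (hy : y ≠ 0) :
    (∑ x ∈ cyc p 0, eta p (x ^ 2 - y)) = (∑ x ∈ cyc p 1, eta p (x ^ 2 - y)) ∧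
    (y ∈ cyc p 0 → (∑ x ∈ cyc p 0, eta p (x ^ 2 - y)) = 0) ∧
    (y ∈ cyc p 1 → (∑ x ∈ cyc p 0, eta p (x ^ 2 - y)) = -1) := by
  have hcard : Fintype.card (ZMod p) % 4 = 3 := by rwa [ZMod.card]
  have hchar : ringChar (ZMod p) ≠ 2 := by rw [ZMod.ringChar_zmod_n]; omega
  have hswap := sum_cyc_zero_eq_sum_cyc_one hp (f := fun x => eta p (x ^ 2 - y)) fun x => by
    rw [neg_sq]
  have htotal := sum_univ_eq_add_sum_cyc fun x => eta p (x ^ 2 - y)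
  simp only [eta_eq_quadraticChar, FiniteField.sum_quadraticChar_sq_sub hchar hy,
    zero_pow two_ne_zero, zero_sub, FiniteField.quadraticChar_neg hcard] at hswap htotal
  simp only [eta_eq_quadraticChar, hswap, true_and]
  refine ⟨fun hy0 => ?_, fun hy1 => ?_⟩
  · rw [mem_cyc_zero, ← quadraticChar_one_iff_isSquare hy] at hy0
    omega
  · rw [mem_cyc_one, ← quadraticChar_neg_one_iff_not_isSquare] at hy1
    omega

end
end
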